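/- arXiv:1409.7033 — 2 statements merged into one kernel-verified Lean document; each statement's English description precedes it below -/
import Mathlib

section
/- Let D=(V,A) be the improved digraph whose associated undirected graph F is a forest, and assume c is nearly conservative on D. If s,t ∈ V and Q is a special-simple walk from s to t, then there exists a directed (simple) path P from s to t with c(P) ≤ c(Q) such that P uses only arcs contained in Q. -/
namespace NearlyConservativePaper

variable {V : Type} [Fintype V] [DecidableEq V]

/-- A weighted digraph given by adjacency and arc weights. -/
structure WDigraph (V : Type) where
  Adj : V → V → Prop
  c : V → V → ℝ

/-- A step `(u, v, b)` of a walk: `b = false` means an original arc from `u` to `v`,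
`b = true` means the added loose arc from `u` to `v`. -/
abbrev Step (V : Type) := V × V × Bool

/-- `IsWalk AS s t l`: `l` is a walk from `s` to `t` using arcs allowed by `AS`. -/
def IsWalk (AS : V → V → Bool → Prop) : V → V → List (Step V) → Prop
  | s, t, [] => s = t
  | s, t, (u, v, b) :: l => u = s ∧ AS u v b ∧ IsWalk AS v t l

/-- The list of head-vertices of the steps of a walk. -/
def heads (l : List (Step V)) : List V := l.map fun a => a.2.1

/-- Total weight of a walk with respect to the step-weight `w`. -/
def wSum (w : V → V → Bool → ℝ) (l : List (Step V)) : ℝ :=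
  (l.map fun a => w a.1 a.2.1 a.2.2).sum

/-- A directed cycle: a nonempty closed walk whose vertices are pairwise distinct. -/
def IsCycle (AS : V → V → Bool → Prop) (s : V) (l : List (Step V)) : Prop :=
  IsWalk AS s s l ∧ l ≠ [] ∧ (heads l).Nodup

/-- A directed (simple) path. -/
def IsPath (AS : V → V → Bool → Prop) (s t : V) (l : List (Step V)) : Prop :=
  IsWalk AS s t l ∧ (s :: heads l).Nodup

/-- Nearly conservative: every negative directed cycle consists of exactly two arcs. -/
def NearlyCons (AS : V → V → Bool → Prop) (w : V → V → Bool → ℝ) : Prop :=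
  ∀ s l, IsCycle AS s l → wSum w l < 0 → l.length = 2

/-- Minimum weight of a directed path from `s` to `t`, `+∞` if there is none. -/
noncomputable def distW (AS : V → V → Bool → Prop) (w : V → V → Bool → ℝ)
    (s t : V) : EReal :=
  sInf {x : EReal | ∃ l, IsPath AS s t l ∧ (wSum w l : EReal) = x}

namespace WDigraph

variable (D : WDigraph V)

/-- The arc `uv` is special if `vu` is also an arc and `c(uv) + c(vu) < 0`. -/
def Special (u v : V) : Prop := D.Adj u v ∧ D.Adj v u ∧ D.c u v + D.c v u < 0

/-- The arcs of the original digraph `D` (only `b = false` steps). -/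
def baseArcs (u v : V) (b : Bool) : Prop := b = false ∧ D.Adj u v

/-- The arcs of the improved digraph: original arcs and, for every special arc `vu`,
an added loose ordinary arc from `u` to `v`. -/
def ImpArc (u v : V) (b : Bool) : Prop := if b then D.Special v u else D.Adj u v

/-- The weight of a step of the improved digraph: the loose arc added for the
special arc `vu` has weight `-c(vu)`. -/
def impW (u v : V) (b : Bool) : ℝ := if b then -(D.c v u) else D.c u v

/-- A walk is special-simple if it contains every special arc at most once and never
contains both a special arc and its opposite. -/
def SpecialSimple (l : List (Step V)) : Prop :=
  ∀ u v, D.Special u v → l.count (u, v, false) + l.count (v, u, false) ≤ 1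

/-- The associated undirected graph `F`. -/
def F : SimpleGraph V where
  Adj u v := u ≠ v ∧ D.Special u v
  symm := by
    constructor
    rintro u v ⟨hne, h1, h2, h3⟩
    exact ⟨hne.symm, h2, h1, by linarith⟩
  loopless := by constructor; rintro u ⟨hne, -⟩; exact hne rfl

/-- The weight of a walk of `F`, each edge being traversed as the special arc pointing
in the direction of the traversal. -/
def fWeight {s t : V} (p : D.F.Walk s t) : ℝ :=
  (p.darts.map fun d => D.c d.toProd.1 d.toProd.2).sum

/-- The improved digraph with the original (special) arcs in `Rem` removed. -/
def arcsMinus (Rem : V → V → Prop) (u v : V) (b : Bool) : Prop :=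
  D.ImpArc u v b ∧ ¬ (b = false ∧ Rem u v)

end WDigraph

/-- The special arcs of the negative tree containing `t₀` (to be removed from `D`). -/
def remT (D : WDigraph V) (t₀ : V) : V → V → Prop :=
  fun x y => D.F.Adj x y ∧ D.F.Reachable t₀ x

section Aux

variable {AS : V → V → Bool → Prop}

lemma isWalk_append {s v t : V} {l1 l2 : List (Step V)}
    (h1 : IsWalk AS s v l1) (h2 : IsWalk AS v t l2) : IsWalk AS s t (l1 ++ l2) := by
  induction l1 generalizing s with
  | nil => cases h1; exact h2
  | cons a l ih =>
    obtain ⟨u, x, b⟩ := a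
    obtain ⟨hu, ha, hw⟩ := h1
    exact ⟨hu, ha, ih hw⟩

lemma wSum_append (w : V → V → Bool → ℝ) (l1 l2 : List (Step V)) :
    wSum w (l1 ++ l2) = wSum w l1 + wSum w l2 := by
  simp [wSum]

lemma split_at_head {s t v : V} {l : List (Step V)}
    (hw : IsWalk AS s t l) (hv : v ∈ heads l) :
    ∃ l1 l2, l = l1 ++ l2 ∧ l1 ≠ [] ∧ IsWalk AS s v l1 ∧ IsWalk AS v t l2 := by
  induction l generalizing s with
  | nil => simp [heads] at hv
  | cons a l ih =>
    obtain ⟨u, x, b⟩ := a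
    obtain ⟨hu, ha, hw'⟩ := hw
    subst hu
    rcases (by simpa [heads] using hv : v = x ∨ v ∈ heads l) with h | h
    · subst h
      exact ⟨[(u, v, b)], l, rfl, by simp, ⟨rfl, ha, rfl⟩, hw'⟩
    · obtain ⟨A, B, hAB, hA, h1, h2⟩ := ih hw' h
      exact ⟨(u, x, b) :: A, B, by rw [hAB]; rfl, by simp, ⟨rfl, ha, h1⟩, h2⟩

lemma dup_decomp {s t : V} {l : List (Step V)}
    (hw : IsWalk AS s t l) (hnd : ¬ (heads l).Nodup) :
    ∃ v l1 l2 l3, l = l1 ++ l2 ++ l3 ∧ l1 ≠ [] ∧ l2 ≠ [] ∧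
      IsWalk AS s v l1 ∧ IsWalk AS v v l2 ∧ IsWalk AS v t l3 := by
  induction l generalizing s with
  | nil => simp [heads] at hnd
  | cons a l ih =>
    obtain ⟨u, x, b⟩ := a
    obtain ⟨hu, ha, hw'⟩ := hw
    subst hu
    have : ¬ (x ∉ heads l ∧ (heads l).Nodup) := by
      intro h; exact hnd (by simpa [heads, List.nodup_cons] using h)
    rcases not_and_or.mp this with h | h
    · have hx : x ∈ heads l := Classical.not_not.mp h
      obtain ⟨A, B, hAB, hA, h1, h2⟩ := split_at_head hw' hx
      exact ⟨x, [(u, x, b)], A, B, by rw [hAB]; rfl, by simp, hA,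
        ⟨rfl, ha, rfl⟩, h1, h2⟩
    · obtain ⟨v, l1, l2, l3, hsplit, h1ne, h2ne, hw1, hw2, hw3⟩ := ih hw' h
      exact ⟨v, (u, x, b) :: l1, l2, l3, by rw [hsplit]; rfl, by simp, h2ne,
        ⟨rfl, ha, hw1⟩, hw2, hw3⟩

lemma ss_mono (D : WDigraph V) {l m : List (Step V)}
    (h : ∀ a : Step V, m.count a ≤ l.count a) (hss : D.SpecialSimple l) :
    D.SpecialSimple m := fun u v hsp =>
  le_trans (add_le_add (h _) (h _)) (hss u v hsp)

/-- No negative special-simple 2-cycle exists in the improved digraph. -/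
lemma two_cycle_false (D : WDigraph V) {v x : V} {b1 b2 : Bool}
    (ha1 : D.ImpArc v x b1) (ha2 : D.ImpArc x v b2)
    (hsum : D.impW v x b1 + D.impW x v b2 < 0)
    (hss : D.SpecialSimple [(v, x, b1), (x, v, b2)]) : False := by
  cases b1 <;> cases b2 <;>
    simp only [WDigraph.ImpArc, WDigraph.impW, Bool.false_eq_true,
      ite_true, ite_false, if_true, if_false] at ha1 ha2 hsum
  · have hc := hss v x ⟨ha1, ha2, hsum⟩
    have h1 : 1 ≤ List.count (v, x, false) [(v, x, false), (x, v, false)] :=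
      List.one_le_count_iff.mpr (by simp)
    have h2 : 1 ≤ List.count (x, v, false) [(v, x, false), (x, v, false)] :=
      List.one_le_count_iff.mpr (by simp)
    omega
  · linarith
  · linarith
  · obtain ⟨-, -, h3⟩ := ha1; linarith

/-- A special-simple closed walk of the improved digraph has nonnegative weight. -/
lemma closed_nonneg (D : WDigraph V) (hnc : NearlyCons D.ImpArc D.impW) :
    ∀ n (v : V) (l : List (Step V)), l.length ≤ n → IsWalk D.ImpArc v v l →
      D.SpecialSimple l → 0 ≤ wSum D.impW l := by
  intro n
  induction n with
  | zero =>
    intro v l hl _ _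
    obtain rfl : l = [] := List.length_eq_zero_iff.mp (Nat.le_zero.mp hl)
    simp [wSum]
  | succ n ih =>
    intro v l hl hw hss
    rcases eq_or_ne l [] with rfl | hne
    · simp [wSum]
    by_cases hnd : (heads l).Nodup
    · -- `l` is a genuine cycle: if negative, it is a bad 2-cycle
      by_contra hneg
      push_neg at hneg
      have hlen : l.length = 2 := hnc v l ⟨hw, hne, hnd⟩ hneg
      obtain ⟨a, b, rfl⟩ := List.length_eq_two.mp hlen
      obtain ⟨u1, x, b1⟩ := a
      obtain ⟨u2, y, b2⟩ := b
      obtain ⟨hu1, ha1, hu2, ha2, hy⟩ := hw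
      subst hu1; subst hu2; subst hy
      exact two_cycle_false D ha1 ha2 (by simpa [wSum] using hneg) hss
    · -- split off a shorter closed subwalk and recurse
      obtain ⟨x, l1, l2, l3, rfl, h1ne, h2ne, hw1, hw2, hw3⟩ := dup_decomp hw hnd
      have hlen12 : l2.length ≤ n := by
        have := List.length_pos_iff.mpr h1ne
        simp only [List.length_append] at hl
        omega
      have hlen13 : (l1 ++ l3).length ≤ n := by
        have := List.length_pos_iff.mpr h2ne
        simp only [List.length_append] at hl ⊢
        omega
      have hcount : ∀ a : Step V, (l1 ++ l3).count a ≤ (l1 ++ l2 ++ l3).count a := by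
        intro a; simp only [List.count_append]; omega
      have hcount2 : ∀ a : Step V, l2.count a ≤ (l1 ++ l2 ++ l3).count a := by
        intro a; simp only [List.count_append]; omega
      have h2 : 0 ≤ wSum D.impW l2 := ih x l2 hlen12 hw2 (ss_mono D hcount2 hss)
      have h13 : 0 ≤ wSum D.impW (l1 ++ l3) :=
        ih v (l1 ++ l3) hlen13 (isWalk_append hw1 hw3) (ss_mono D hcount hss)
      rw [wSum_append] at h13
      rw [wSum_append, wSum_append]
      linarith

end Aux

/-- If the associated graph `F` is a forest, `c` is nearly conservative on the
improved digraph `D`, and `Q` is a special-simple walk from `s` to `t`, then there is a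
(simple) path `P` from `s` to `t` with `c(P) ≤ c(Q)` using only arcs contained in `Q`. -/
theorem statement_1 {V : Type} [Fintype V] [DecidableEq V] (D : WDigraph V)
    (hloop : ∀ v, ¬ D.Adj v v) (hforest : D.F.IsAcyclic)
    (hnc : NearlyCons D.ImpArc D.impW)
    (s t : V) (Q : List (Step V))
    (hQ : IsWalk D.ImpArc s t Q) (hQss : D.SpecialSimple Q) :
    ∃ P : List (Step V), IsPath D.ImpArc s t P ∧
      wSum D.impW P ≤ wSum D.impW Q ∧ ∀ a ∈ P, a ∈ Q := by
  clear hloop hforest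
  have key : ∀ n (s : V) (Q : List (Step V)), Q.length ≤ n →
      IsWalk D.ImpArc s t Q → D.SpecialSimple Q →
      ∃ P : List (Step V), IsPath D.ImpArc s t P ∧
        wSum D.impW P ≤ wSum D.impW Q ∧ ∀ a ∈ P, a ∈ Q := by
    intro n
    induction n with
    | zero =>
      intro s Q hl hw _
      obtain rfl : Q = [] := List.length_eq_zero_iff.mp (Nat.le_zero.mp hl)
      exact ⟨[], ⟨hw, by simp [heads]⟩, le_refl _, by simp⟩
    | succ n ih =>
      intro s Q hl hw hss
      by_cases hnd : (s :: heads Q).Nodup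
      · exact ⟨Q, ⟨hw, hnd⟩, le_refl _, fun a ha => ha⟩
      by_cases hs : s ∈ heads Q
      · -- remove a closed prefix through s
        obtain ⟨A, B, rfl, hAne, hwA, hwB⟩ := split_at_head hw hs
        have hcount : ∀ a : Step V, B.count a ≤ (A ++ B).count a := by
          intro a; simp [List.count_append]
        have hBlen : B.length ≤ n := by
          have := List.length_pos_iff.mpr hAne
          simp only [List.length_append] at hl
          omega
        have hcountA : ∀ a : Step V, A.count a ≤ (A ++ B).count a := by
          intro a; simp [List.count_append]
        have hA0 : 0 ≤ wSum D.impW A :=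
          closed_nonneg D hnc A.length s A (le_refl _) hwA (ss_mono D hcountA hss)
        obtain ⟨P, hP, hPle, hPmem⟩ := ih s B hBlen hwB (ss_mono D hcount hss)
        refine ⟨P, hP, ?_, fun a ha => by
          simp only [List.mem_append]; exact Or.inr (hPmem a ha)⟩
        rw [wSum_append]
        linarith
      · -- duplicate vertex inside the walk
        have hnd' : ¬ (heads Q).Nodup := by
          intro h
          exact hnd (List.nodup_cons.mpr ⟨hs, h⟩)
        obtain ⟨x, l1, l2, l3, rfl, h1ne, h2ne, hw1, hw2, hw3⟩ := dup_decomp hw hnd'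
        have hcount : ∀ a : Step V, (l1 ++ l3).count a ≤ (l1 ++ l2 ++ l3).count a := by
          intro a; simp only [List.count_append]; omega
        have hcount2 : ∀ a : Step V, l2.count a ≤ (l1 ++ l2 ++ l3).count a := by
          intro a; simp only [List.count_append]; omega
        have hlen13 : (l1 ++ l3).length ≤ n := by
          have := List.length_pos_iff.mpr h2ne
          simp only [List.length_append] at hl ⊢
          omega
        have h20 : 0 ≤ wSum D.impW l2 :=
          closed_nonneg D hnc l2.length x l2 (le_refl _) hw2 (ss_mono D hcount2 hss)
        obtain ⟨P, hP, hPle, hPmem⟩ := ih s (l1 ++ l3) hlen13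
          (isWalk_append hw1 hw3) (ss_mono D hcount hss)
        refine ⟨P, hP, ?_, fun a ha => ?_⟩
        · rw [wSum_append] at hPle
          rw [wSum_append, wSum_append]
          linarith
        · have := hPmem a ha
          simp only [List.mem_append] at this ⊢
          tauto
  exact key Q.length s Q (le_refl _) hQ hQss

end NearlyConservativePaper
end

section
/- Let D be the improved digraph whose associated undirected graph F is a forest with exactly one nontrivial component, a negative tree T, and suppose T spans V, i.e., V(T) = V. Then c is nearly conservative on D if and only if for every ordinary arc uv of D one has c(uv) ≥ −d^T(v,u). -/
namespace NearlyConservativePaper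

variable {V : Type} [Fintype V] [DecidableEq V]

/-! ### Auxiliary lemmas about abstract walks -/

section WalkAux

set_option linter.unusedSectionVars false

variable {AS : V → V → Bool → Prop}

lemma heads_cons (a : Step V) (l : List (Step V)) : heads (a :: l) = a.2.1 :: heads l := rfl

lemma heads_append (l₁ l₂ : List (Step V)) : heads (l₁ ++ l₂) = heads l₁ ++ heads l₂ :=
  List.map_append

lemma isWalk_nil' {s t : V} : IsWalk AS s t ([] : List (Step V)) ↔ s = t := Iff.rfl

lemma isWalk_cons' {s t : V} {a : Step V} {l : List (Step V)} :
    IsWalk AS s t (a :: l) ↔ a.1 = s ∧ AS a.1 a.2.1 a.2.2 ∧ IsWalk AS a.2.1 t l := by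
  obtain ⟨x, y, b⟩ := a
  exact Iff.rfl

lemma wk_append {s m t : V} {l₁ l₂ : List (Step V)} (h₁ : IsWalk AS s m l₁)
    (h₂ : IsWalk AS m t l₂) : IsWalk AS s t (l₁ ++ l₂) := by
  induction l₁ generalizing s with
  | nil => rw [isWalk_nil'] at h₁; subst h₁; exact h₂
  | cons a l ih =>
    rw [isWalk_cons'] at h₁
    exact isWalk_cons'.mpr ⟨h₁.1, h₁.2.1, ih h₁.2.2⟩

lemma wk_decomp {s t : V} {l₁ l₂ : List (Step V)} (h : IsWalk AS s t (l₁ ++ l₂)) :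
    ∃ m, IsWalk AS s m l₁ ∧ IsWalk AS m t l₂ := by
  induction l₁ generalizing s with
  | nil => exact ⟨s, rfl, h⟩
  | cons a l ih =>
    rw [List.cons_append, isWalk_cons'] at h
    obtain ⟨m, hm1, hm2⟩ := ih h.2.2
    exact ⟨m, isWalk_cons'.mpr ⟨h.1, h.2.1, hm1⟩, hm2⟩

lemma wk_steps {s t : V} {l : List (Step V)} (h : IsWalk AS s t l) :
    ∀ a ∈ l, AS a.1 a.2.1 a.2.2 := by
  induction l generalizing s with
  | nil => simp
  | cons a l ih =>
    rw [isWalk_cons'] at h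
    intro a' ha'
    rcases List.mem_cons.mp ha' with rfl | ha'
    · exact h.2.1
    · exact ih h.2.2 a' ha'

lemma wk_end_mem {s t : V} {l : List (Step V)} (h : IsWalk AS s t l) (hl : l ≠ []) :
    t ∈ heads l := by
  induction l generalizing s with
  | nil => exact absurd rfl hl
  | cons a l ih =>
    rw [isWalk_cons'] at h
    rw [heads_cons]
    by_cases hl' : l = []
    · subst hl'
      rw [isWalk_nil'] at *
      exact (h.2.2 ▸ List.mem_singleton_self _)
    · exact List.mem_cons.mpr (Or.inr (ih h.2.2 hl'))

lemma wk_tele (φ : V → ℝ) {s t : V} {l : List (Step V)} (h : IsWalk AS s t l) :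
    (l.map fun a => φ a.2.1 - φ a.1).sum = φ t - φ s := by
  induction l generalizing s with
  | nil => rw [isWalk_nil'] at h; subst h; simp
  | cons a l ih =>
    rw [isWalk_cons'] at h
    obtain ⟨h1, _, h3⟩ := h
    simp only [List.map_cons, List.sum_cons, ih h3, h1]
    ring

lemma wk_chain {R : V → V → Prop} (hrefl : ∀ a, R a a)
    (htrans : ∀ {a b c}, R a b → R b c → R a c) {s t : V} {l : List (Step V)}
    (h : IsWalk AS s t l) (hR : ∀ a ∈ l, R a.1 a.2.1) : R s t := by
  induction l generalizing s with
  | nil => rw [isWalk_nil'] at h; subst h; exact hrefl s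
  | cons a l ih =>
    rw [isWalk_cons'] at h
    obtain ⟨h1, _, h3⟩ := h
    subst h1
    exact htrans (hR a (by simp)) (ih h3 fun a' ha' => hR a' (by simp [ha']))

lemma no_opposite (hns : ∀ (z : V) (c : Bool), ¬ AS z z c) {s x y : V} {b b' : Bool}
    {l : List (Step V)} (hw : IsWalk AS s s l) (hnd : (heads l).Nodup)
    (h1 : (x, y, b) ∈ l) (h2 : (y, x, b') ∈ l) : l.length = 2 := by
  have hxy : x ≠ y := by
    rintro rfl
    exact hns x b (wk_steps hw _ h1)
  obtain ⟨l₁, l₂, rfl⟩ := List.append_of_mem h1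
  obtain ⟨m, hm1, hm2⟩ := wk_decomp hw
  rw [isWalk_cons'] at hm2
  obtain ⟨hmx, hax, hw2⟩ := hm2
  simp only at hmx hax hw2
  subst hmx
  have hw2' : IsWalk AS y x (l₂ ++ l₁) := wk_append hw2 hm1
  have hnd' : (heads ((x, y, b) :: (l₂ ++ l₁))).Nodup := by
    have hp : (l₁ ++ (x, y, b) :: l₂).Perm ((x, y, b) :: (l₂ ++ l₁)) :=
      List.perm_middle.trans (List.Perm.cons _ List.perm_append_comm)
    exact (hp.map fun a : Step V => a.2.1).nodup hnd
  have h2' : (y, x, b') ∈ l₂ ++ l₁ := by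
    have hne : (y, x, b') ≠ (x, y, b) := by
      intro hhh
      exact hxy (by injection hhh with h _; exact h.symm)
    rcases List.mem_append.mp h2 with hh | hh
    · exact List.mem_append.mpr (Or.inr hh)
    · rcases List.mem_cons.mp hh with hh2 | hh2
      · exact absurd hh2 hne
      · exact List.mem_append.mpr (Or.inl hh2)
  obtain ⟨m₁, m₂, hsplit⟩ := List.append_of_mem h2'
  rw [hsplit] at hw2' hnd'
  obtain ⟨m', hma, hmb⟩ := wk_decomp hw2'
  rw [isWalk_cons'] at hmb
  obtain ⟨hmy, _, hmc⟩ := hmb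
  simp only at hmy hmc
  subst hmy
  rw [heads_cons, heads_append, heads_cons] at hnd'
  simp only at hnd'
  obtain ⟨hy_notmem, hnd''⟩ := List.nodup_cons.mp hnd'
  have hm₁ : m₁ = [] := by
    by_contra hm₁ne
    exact hy_notmem (List.mem_append.mpr (Or.inl (wk_end_mem hma hm₁ne)))
  subst hm₁
  have hm₂ : m₂ = [] := by
    by_contra hm₂ne
    have hx : x ∈ heads m₂ := wk_end_mem hmc hm₂ne
    simp only [heads, List.map_nil, List.nil_append, List.nodup_cons] at hnd''
    exact hnd''.1 hx
  subst hm₂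
  have hll : l₂ ++ l₁ = [(y, x, b')] := hsplit
  have hlen : l₂.length + l₁.length = 1 := by
    have := congrArg List.length hll
    simpa using this
  simp only [List.length_append, List.length_cons]
  omega

end WalkAux

/-! ### Auxiliary lemmas about the forest `F` -/

open SimpleGraph

section GraphAux

set_option linter.unusedSectionVars false

/-- Sum of a dart-weight function over a walk. -/
def dsum {G : SimpleGraph V} (f : V → V → ℝ) {a b : V} (p : G.Walk a b) : ℝ :=
  (p.darts.map fun d => f d.toProd.1 d.toProd.2).sum

@[simp] lemma dsum_nil {G : SimpleGraph V} (f : V → V → ℝ) (a : V) :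
    dsum f (Walk.nil : G.Walk a a) = 0 := by simp [dsum]

@[simp] lemma dsum_cons {G : SimpleGraph V} (f : V → V → ℝ) {a x b : V} (h : G.Adj a x)
    (p : G.Walk x b) : dsum f (Walk.cons h p) = f a x + dsum f p := by simp [dsum]

@[simp] lemma dsum_append {G : SimpleGraph V} (f : V → V → ℝ) {a b c : V} (p : G.Walk a b)
    (q : G.Walk b c) : dsum f (p.append q) = dsum f p + dsum f q := by
  simp [dsum, Walk.darts_append]

variable {D : WDigraph V}

lemma fWeight_eq_dsum {a b : V} (p : D.F.Walk a b) : D.fWeight p = dsum D.c p := rfl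

lemma special_symm {u v : V} (h : D.Special u v) : D.Special v u :=
  ⟨h.2.1, h.1, by linarith [h.2.2]⟩

lemma spec_ne (hloop : ∀ v, ¬ D.Adj v v) {u v : V} (h : D.Special u v) : u ≠ v := by
  intro he; exact hloop v (he ▸ h.1)

lemma F_adj (hloop : ∀ v, ¬ D.Adj v v) {u v : V} (h : D.Special u v) : D.F.Adj u v :=
  ⟨spec_ne hloop h, h⟩

lemma no_self_imp (hloop : ∀ v, ¬ D.Adj v v) (z : V) (b : Bool) : ¬ D.ImpArc z z b := by
  cases b <;> simp [WDigraph.ImpArc] <;> intro h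
  · exact hloop z h
  · exact hloop z h.1

/-- The chosen path between two vertices. -/
noncomputable def pth (D : WDigraph V) (hr : ∀ a b : V, D.F.Reachable a b) (a b : V) :
    D.F.Walk a b := ((Classical.choice (hr a b)).toPath : D.F.Path a b).1

lemma pth_isPath (hr : ∀ a b : V, D.F.Reachable a b) (a b : V) : (pth D hr a b).IsPath :=
  ((Classical.choice (hr a b)).toPath : D.F.Path a b).2

lemma pth_eq (hforest : D.F.IsAcyclic) (hr : ∀ a b : V, D.F.Reachable a b) {a b : V}
    {p : D.F.Walk a b} (hp : p.IsPath) : p = pth D hr a b :=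
  congrArg Subtype.val (isAcyclic_iff_path_unique.mp hforest ⟨p, hp⟩ ⟨_, pth_isPath hr a b⟩)

lemma pth_adj (hforest : D.F.IsAcyclic) (hr : ∀ a b : V, D.F.Reachable a b) {a b : V}
    (hab : D.F.Adj a b) : pth D hr a b = Walk.cons hab Walk.nil :=
  (pth_eq hforest hr (Path.singleton hab).2).symm

/-- The symmetric edge weight. -/
def sigE (D : WDigraph V) : Sym2 V → ℝ :=
  Sym2.lift ⟨fun x y => D.c x y + D.c y x, fun x y => by ring⟩

@[simp] lemma sigE_mk (x y : V) : sigE D s(x, y) = D.c x y + D.c y x := rfl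

lemma sigE_neg {e : Sym2 V} (he : e ∈ D.F.edgeSet) : sigE D e < 0 := by
  induction e with
  | _ x y =>
    rw [mem_edgeSet] at he
    simpa using he.2.2.2

lemma dsum_sig_eq_edges {a b : V} (p : D.F.Walk a b) :
    dsum (fun x y => D.c x y + D.c y x) p = (p.edges.map (sigE D)).sum := by
  simp only [dsum, Walk.edges, List.map_map]
  rfl

abbrev lamf (D : WDigraph V) : V → V → ℝ := fun x y => D.c x y - D.c y x

lemma psi_adj (hforest : D.F.IsAcyclic) (hr : ∀ a b : V, D.F.Reachable a b) (t₀ : V)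
    {a b : V} (hab : D.F.Adj a b) :
    dsum (lamf D) (pth D hr t₀ b) = dsum (lamf D) (pth D hr t₀ a) + lamf D a b := by
  set p := pth D hr t₀ a with hpdef
  have hp : p.IsPath := pth_isPath hr t₀ a
  by_cases hb : b ∈ p.support
  · have hdrop : p.dropUntil b hb = Walk.cons hab.symm Walk.nil := by
      have h1 : (p.dropUntil b hb).IsPath := hp.dropUntil hb
      have h2 : (Walk.cons hab.symm Walk.nil : D.F.Walk b a).IsPath := (Path.singleton hab.symm).2
      exact congrArg Subtype.val (isAcyclic_iff_path_unique.mp hforest ⟨_, h1⟩ ⟨_, h2⟩)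
    have htake : p.takeUntil b hb = pth D hr t₀ b := pth_eq hforest hr (hp.takeUntil hb)
    have hsplit : dsum (lamf D) ((p.takeUntil b hb).append (p.dropUntil b hb))
        = dsum (lamf D) p := by rw [p.take_spec hb]
    rw [dsum_append, htake, hdrop] at hsplit
    simp only [dsum_cons, dsum_nil, lamf] at hsplit ⊢
    linarith
  · have hcat : (p.concat hab).IsPath := by
      rw [← Walk.isPath_reverse_iff, Walk.reverse_concat]
      refine (Walk.cons_isPath_iff _ _).mpr ⟨hp.reverse, ?_⟩
      simpa [Walk.support_reverse] using hb
    have hcat2 : p.concat hab = pth D hr t₀ b := pth_eq hforest hr hcat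
    rw [← hcat2, Walk.concat, dsum_append, dsum_cons, dsum_nil]
    ring

lemma dsum_lam (hforest : D.F.IsAcyclic) (hr : ∀ a b : V, D.F.Reachable a b) (t₀ : V)
    {x y : V} (p : D.F.Walk x y) :
    dsum (lamf D) p
      = dsum (lamf D) (pth D hr t₀ y) - dsum (lamf D) (pth D hr t₀ x) := by
  induction p with
  | nil => simp
  | cons h q ih =>
    rw [dsum_cons, ih]
    have := psi_adj hforest hr t₀ h
    linarith

lemma dsum_split {x y : V} (p : D.F.Walk x y) :
    dsum D.c p = (dsum (lamf D) p + dsum (fun x y => D.c x y + D.c y x) p) / 2 := by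
  induction p with
  | nil => simp
  | cons h q ih => rw [dsum_cons, dsum_cons, dsum_cons, ih]; ring

/-- Master formula for the weight of any walk in `F`. -/
lemma fWeight_formula (hforest : D.F.IsAcyclic) (hr : ∀ a b : V, D.F.Reachable a b) (t₀ : V)
    {x y : V} (p : D.F.Walk x y) :
    D.fWeight p = (dsum (lamf D) (pth D hr t₀ y) - dsum (lamf D) (pth D hr t₀ x)
      + (p.edges.map (sigE D)).sum) / 2 := by
  rw [fWeight_eq_dsum, dsum_split, dsum_lam hforest hr t₀ p, dsum_sig_eq_edges]

end GraphAux

/-! ### Small list/finset helpers -/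

section SumAux

lemma list_sum_map_add {α : Type*} (l : List α) (f g : α → ℝ) :
    (l.map fun a => f a + g a).sum = (l.map f).sum + (l.map g).sum := by
  induction l with
  | nil => simp
  | cons a l ih => simp only [List.map_cons, List.sum_cons, ih]; ring

lemma list_sum_map_half {α : Type*} (l : List α) (f : α → ℝ) :
    (l.map fun a => f a / 2).sum = (l.map f).sum / 2 := by
  induction l with
  | nil => simp
  | cons a l ih => simp only [List.map_cons, List.sum_cons, ih]; ring

lemma cover_sum {α β : Type*} [DecidableEq α] [DecidableEq β] (I : Finset β)
    (g : β → Finset α) (E : Finset α) (f : α → ℝ) (hf : ∀ e ∈ E, f e ≤ 0)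
    (hsub : ∀ i ∈ I, g i ⊆ E) (hcov : ∀ e ∈ E, ∃ i ∈ I, e ∈ g i) :
    ∑ i ∈ I, ∑ e ∈ g i, f e ≤ ∑ e ∈ E, f e := by
  have h1 : ∀ i ∈ I, ∑ e ∈ g i, f e = ∑ e ∈ E, if e ∈ g i then f e else 0 := by
    intro i hi
    rw [← Finset.sum_filter]
    congr 1
    ext e
    simp only [Finset.mem_filter]
    exact ⟨fun h => ⟨hsub i hi h, h⟩, fun h => h.2⟩
  rw [Finset.sum_congr rfl h1, Finset.sum_comm]
  apply Finset.sum_le_sum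
  intro e he
  obtain ⟨i₀, hi₀, hei₀⟩ := hcov e he
  rw [← Finset.add_sum_erase _ _ hi₀, if_pos hei₀]
  have h2 : ∑ i ∈ I.erase i₀, (if e ∈ g i then f e else 0) ≤ 0 := by
    apply Finset.sum_nonpos
    intro i _
    split
    · exact hf e he
    · exact le_refl 0
  linarith

end SumAux

/-- Suppose the forest `F` has exactly one nontrivial component, the negative
tree `T` containing `t₀`, and `T` spans `V`.  Then `c` is nearly conservative on the
improved digraph `D` if and only if `c(uv) ≥ −d^T(v,u)` for every ordinary arc `uv`. -/
theorem statement_7 {V : Type} [Fintype V] [DecidableEq V] (D : WDigraph V)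
    (hloop : ∀ v, ¬ D.Adj v v) (hforest : D.F.IsAcyclic)
    (t₀ : V) (hT : ∃ y, D.F.Adj t₀ y)
    (hspan : ∀ x, D.F.Reachable t₀ x) :
    NearlyCons D.ImpArc D.impW ↔
      ∀ u v b, D.ImpArc u v b → (b = false → ¬ D.Special u v) →
        ∀ q : D.F.Walk v u, q.IsPath → -(D.fWeight q) ≤ D.impW u v b := by
  classical
  have hr : ∀ a b : V, D.F.Reachable a b := fun a b => (hspan a).symm.trans (hspan b)
  have hnoself : ∀ (z : V) (b : Bool), ¬ D.ImpArc z z b := no_self_imp hloop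
  constructor
  · -- easy direction
    intro hNC u v b harc hord q hq
    set l : List (Step V) :=
      (u, v, b) :: (q.darts.map fun d => (d.toProd.1, d.toProd.2, false)) with hl
    have hwq : ∀ {x y : V} (p : D.F.Walk x y),
        IsWalk D.ImpArc x y (p.darts.map fun d => (d.toProd.1, d.toProd.2, false)) := by
      intro x y p
      induction p with
      | nil => exact rfl
      | cons h p ih =>
        refine isWalk_cons'.mpr ⟨rfl, ?_, ih⟩
        exact h.2.1
    have hwalk : IsWalk D.ImpArc u u l := isWalk_cons'.mpr ⟨rfl, harc, hwq q⟩
    have hheads : heads l = q.support := by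
      simp only [hl, heads, List.map_cons, List.map_map]
      have : ((fun a : Step V => a.2.1) ∘ fun d : D.F.Dart => (d.toProd.1, d.toProd.2, false))
          = fun d : D.F.Dart => d.snd := rfl
      rw [this, Walk.map_snd_darts, ← Walk.support_eq_cons]
    have hcyc : IsCycle D.ImpArc u l :=
      ⟨hwalk, by simp [hl], by rw [hheads]; exact hq.support_nodup⟩
    have hsum : wSum D.impW l = D.impW u v b + D.fWeight q := by
      have hfun : ((fun a : Step V => D.impW a.1 a.2.1 a.2.2) ∘
          fun d : D.F.Dart => (d.toProd.1, d.toProd.2, false))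
          = fun d : D.F.Dart => D.c d.toProd.1 d.toProd.2 := rfl
      simp only [hl, wSum, List.map_cons, List.sum_cons, List.map_map, hfun]
      rfl
    by_cases hneg : wSum D.impW l < 0
    · have hlen := hNC u l hcyc hneg
      have hq1 : q.darts.length = 1 := by
        simp only [hl, List.length_cons, List.length_map] at hlen
        omega
      obtain ⟨d, hd⟩ := List.length_eq_one_iff.mp hq1
      have hwd : IsWalk D.ImpArc u u ((u, v, b) :: [(d.toProd.1, d.toProd.2, false)]) := by
        rw [hl, hd] at hwalk
        exact hwalk
      rw [isWalk_cons'] at hwd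
      obtain ⟨-, -, hwd2⟩ := hwd
      rw [isWalk_cons'] at hwd2
      obtain ⟨hd1, -, hd2⟩ := hwd2
      rw [isWalk_nil'] at hd2
      simp only at hd1 hd2
      have hadj : D.F.Adj v u := by
        have := d.adj
        rw [hd1, hd2] at this
        exact this
      have hspvu : D.Special v u := hadj.2
      have hfw : D.fWeight q = D.c v u := by
        simp only [WDigraph.fWeight, hd, List.map_cons, List.map_nil, List.sum_cons,
          List.sum_nil, hd1, hd2, add_zero]
      cases b with
      | false => exact absurd (special_symm hspvu) (hord rfl)
      | true =>
        exfalso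
        rw [hsum, hfw] at hneg
        have : D.impW u v true = -(D.c v u) := rfl
        rw [this] at hneg
        linarith
    · push_neg at hneg
      rw [hsum] at hneg
      linarith
  · -- hard direction
    intro H s l hcyc hneg
    obtain ⟨hw, hlne, hnd⟩ := hcyc
    by_contra hk2
    have hlnd : l.Nodup := List.Nodup.of_map _ hnd
    set Φ : V → ℝ := fun v => dsum (lamf D) (pth D hr t₀ v) with hΦ
    set Sp : Step V → Prop := fun a => a.2.2 = false ∧ D.Special a.1 a.2.1 with hSp
    set T : Step V → ℝ := fun a =>
      if Sp a then sigE D s(a.1, a.2.1)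
      else -((pth D hr a.2.1 a.1).edges.map (sigE D)).sum with hT
    -- per-step lower bound
    have hbound : ∀ a ∈ l, (Φ a.2.1 - Φ a.1) / 2 + T a / 2 ≤ D.impW a.1 a.2.1 a.2.2 := by
      intro a ha
      have harc := wk_steps hw a ha
      by_cases hsp : Sp a
      · obtain ⟨hb, hspec⟩ := hsp
        have hadj : D.F.Adj a.1 a.2.1 := F_adj hloop hspec
        have h1 : pth D hr a.1 a.2.1 = Walk.cons hadj Walk.nil := pth_adj hforest hr hadj
        have h3 := fWeight_formula hforest hr t₀ (pth D hr a.1 a.2.1)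
        have h2 : D.fWeight (pth D hr a.1 a.2.1) = D.c a.1 a.2.1 := by
          rw [h1, fWeight_eq_dsum, dsum_cons, dsum_nil, add_zero]
        have h4 : ((pth D hr a.1 a.2.1).edges.map (sigE D)).sum = sigE D s(a.1, a.2.1) := by
          rw [h1]
          simp
        have h5 : D.impW a.1 a.2.1 a.2.2 = D.c a.1 a.2.1 := by
          rw [hb]; rfl
        rw [hT]
        simp only [if_pos (show Sp a from ⟨hb, hspec⟩)]
        rw [h5]
        rw [h2, h4] at h3
        rw [hΦ] at *
        linarith
      · have hord : a.2.2 = false → ¬ D.Special a.1 a.2.1 := fun hb hspec => hsp ⟨hb, hspec⟩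
        have hH := H a.1 a.2.1 a.2.2 harc hord (pth D hr a.2.1 a.1) (pth_isPath hr _ _)
        have h3 := fWeight_formula hforest hr t₀ (pth D hr a.2.1 a.1)
        rw [hT]
        simp only [if_neg hsp]
        rw [h3] at hH
        rw [hΦ] at *
        linarith
    -- summing
    have htel : (l.map fun a => Φ a.2.1 - Φ a.1).sum = 0 := by
      rw [wk_tele Φ hw]; ring
    have hsum1 : (l.map T).sum / 2 ≤ wSum D.impW l := by
      have hle := List.sum_le_sum hbound
      have heq : (l.map fun a => (Φ a.2.1 - Φ a.1) / 2 + T a / 2).sum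
          = ((l.map fun a => Φ a.2.1 - Φ a.1).sum + (l.map T).sum) / 2 := by
        rw [list_sum_map_add l (fun a => (Φ a.2.1 - Φ a.1) / 2) (fun a => T a / 2)]
        rw [list_sum_map_half l (fun a => Φ a.2.1 - Φ a.1), list_sum_map_half l T]; ring
      rw [heq, htel] at hle
      calc (l.map T).sum / 2 = (0 + (l.map T).sum) / 2 := by ring
      _ ≤ wSum D.impW l := hle
    -- the set of special edges used by the cycle
    set E₀ : Finset (Sym2 V) :=
      ((l.toFinset.filter Sp).image fun a => s(a.1, a.2.1)) with hE₀
    have hE₀edge : ∀ e ∈ E₀, e ∈ D.F.edgeSet := by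
      intro e he
      simp only [hE₀, Finset.mem_image, Finset.mem_filter, List.mem_toFinset] at he
      obtain ⟨a, ⟨hal, hsp⟩, rfl⟩ := he
      exact F_adj hloop hsp.2
    have hinj : ∀ a ∈ l.toFinset.filter Sp, ∀ a' ∈ l.toFinset.filter Sp,
        s(a.1, a.2.1) = s(a'.1, a'.2.1) → a = a' := by
      intro a ha a' ha' hee
      simp only [Finset.mem_filter, List.mem_toFinset] at ha ha'
      rcases Sym2.eq_iff.mp hee with ⟨h1, h2⟩ | ⟨h1, h2⟩
      · have hb : a.2.2 = a'.2.2 := by rw [ha.2.1, ha'.2.1]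
        have : (a.1, a.2.1, a.2.2) = (a'.1, a'.2.1, a'.2.2) := by rw [h1, h2, hb]
        exact this
      · exfalso
        apply hk2
        have hmem2 : (a.2.1, a.1, a'.2.2) ∈ l := by
          rw [h2, h1]; exact ha'.1
        exact no_opposite hnoself hw hnd (show (a.1, a.2.1, a.2.2) ∈ l from ha.1) hmem2
    -- coverage of special edges by ordinary tree paths
    have hcov : ∀ e ∈ E₀, ∃ a ∈ l.toFinset.filter (fun a => ¬ Sp a),
        e ∈ (pth D hr a.2.1 a.1).edges.toFinset ∩ E₀ := by
      intro e heE
      obtain ⟨a₀, ha₀, hee⟩ : ∃ a ∈ l.toFinset.filter Sp, s(a.1, a.2.1) = e := by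
        simpa [hE₀, Finset.mem_image] using heE
      simp only [Finset.mem_filter, List.mem_toFinset] at ha₀
      obtain ⟨ha₀l, hb₀, hspec₀⟩ := ha₀
      by_contra hno
      push_neg at hno
      set R : V → V → Prop := fun u w => (D.F.deleteEdges {e}).Reachable u w with hRdef
      have hstep : ∀ a ∈ l, a ≠ a₀ → R a.1 a.2.1 := by
        intro a ha hne
        by_cases hsp : Sp a
        · have hadj : D.F.Adj a.1 a.2.1 := F_adj hloop hsp.2
          have hedge : s(a.1, a.2.1) ≠ e := by
            rw [← hee]
            intro hee2
            rcases Sym2.eq_iff.mp hee2 with ⟨h1, h2⟩ | ⟨h1, h2⟩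
            · apply hne
              have hb : a.2.2 = a₀.2.2 := by rw [hsp.1, hb₀]
              show (a.1, a.2.1, a.2.2) = (a₀.1, a₀.2.1, a₀.2.2)
              rw [h1, h2, hb]
            · apply hk2
              have hmem2 : (a.2.1, a.1, a₀.2.2) ∈ l := by
                rw [h2, h1]; exact ha₀l
              exact no_opposite hnoself hw hnd (show (a.1, a.2.1, a.2.2) ∈ l from ha) hmem2
          exact Adj.reachable (by rw [deleteEdges_adj]; exact ⟨hadj, by simpa using hedge⟩)
        · have hmem : a ∈ l.toFinset.filter (fun a => ¬ Sp a) := by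
            simp only [Finset.mem_filter, List.mem_toFinset]
            exact ⟨ha, hsp⟩
          have hne' := hno a hmem
          have henotin : e ∉ (pth D hr a.2.1 a.1).edges := by
            intro hmem2
            exact hne' (Finset.mem_inter.mpr ⟨List.mem_toFinset.mpr hmem2, heE⟩)
          have hwalkdel := (pth D hr a.2.1 a.1).toDeleteEdges {e}
            (fun e' he' => by
              simp only [Set.mem_singleton_iff]
              rintro rfl
              exact henotin he')
          exact hwalkdel.reachable.symm
      -- chain around the cycle
      obtain ⟨l₁, l₂, hldec⟩ := List.append_of_mem (show (a₀.1, a₀.2.1, a₀.2.2) ∈ l from ha₀l)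
      have hnmem : a₀ ∉ l₁ ∧ a₀ ∉ l₂ := by
        rw [hldec] at hlnd
        rw [List.nodup_append] at hlnd
        obtain ⟨-, hnd2, hdisj⟩ := hlnd
        constructor
        · intro hmem
          exact hdisj a₀ hmem a₀ List.mem_cons_self rfl
        · exact (List.nodup_cons.mp hnd2).1
      rw [hldec] at hw
      obtain ⟨m, hm1, hm2⟩ := wk_decomp hw
      rw [isWalk_cons'] at hm2
      obtain ⟨hmeq, -, hw2⟩ := hm2
      simp only at hmeq hw2
      subst hmeq
      have hrefl : ∀ a, R a a := fun a => Reachable.refl a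
      have htrans : ∀ {a b c}, R a b → R b c → R a c := fun h1 h2 => h1.trans h2
      have hR1 : R a₀.2.1 s := wk_chain hrefl htrans hw2 (fun a ha => hstep a
        (by rw [hldec]; exact List.mem_append.mpr (Or.inr (List.mem_cons.mpr (Or.inr ha))))
        (fun heq => hnmem.2 (heq ▸ ha)))
      have hR2 : R s a₀.1 := wk_chain hrefl htrans hm1 (fun a ha => hstep a
        (by rw [hldec]; exact List.mem_append.mpr (Or.inl ha))
        (fun heq => hnmem.1 (heq ▸ ha)))
      have hRfin : R a₀.1 a₀.2.1 := (htrans hR1 hR2).symm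
      -- contradiction with the bridge property
      have hadj₀ : D.F.Adj a₀.1 a₀.2.1 := F_adj hloop hspec₀
      have hbr := isAcyclic_iff_forall_edge_isBridge.mp hforest
        (show s(a₀.1, a₀.2.1) ∈ D.F.edgeSet from hadj₀)
      rw [isBridge_iff] at hbr
      apply hbr
      have hRfin' : (D.F.deleteEdges {e}).Reachable a₀.1 a₀.2.1 := hRfin
      rw [← hee] at hRfin'
      exact hRfin'
    -- the sum of T is nonnegative
    have hTsum : 0 ≤ (l.map T).sum := by
      have hlistfin : (l.map T).sum = ∑ a ∈ l.toFinset, T a := (List.sum_toFinset T hlnd).symm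
      rw [hlistfin, ← Finset.sum_filter_add_sum_filter_not l.toFinset Sp T]
      have hspecsum : ∑ a ∈ l.toFinset.filter Sp, T a = ∑ e ∈ E₀, sigE D e := by
        rw [hE₀, Finset.sum_image hinj]
        apply Finset.sum_congr rfl
        intro a ha
        rw [hT]
        exact if_pos (Finset.mem_filter.mp ha).2
      have hordsum : ∀ a ∈ l.toFinset.filter (fun a => ¬ Sp a),
          T a = -((pth D hr a.2.1 a.1).edges.map (sigE D)).sum := by
        intro a ha
        rw [hT]
        exact if_neg (Finset.mem_filter.mp ha).2
      have hbound2 : ∀ a ∈ l.toFinset.filter (fun a => ¬ Sp a),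
          ((pth D hr a.2.1 a.1).edges.map (sigE D)).sum
            ≤ ∑ e ∈ (pth D hr a.2.1 a.1).edges.toFinset ∩ E₀, sigE D e := by
        intro a ha
        have hnd3 : (pth D hr a.2.1 a.1).edges.Nodup := (pth_isPath hr _ _).edges_nodup
        rw [← List.sum_toFinset _ hnd3]
        have hsub2 : (pth D hr a.2.1 a.1).edges.toFinset ∩ E₀
            ⊆ (pth D hr a.2.1 a.1).edges.toFinset := Finset.inter_subset_left
        rw [← Finset.sum_sdiff hsub2]
        have hnonpos : ∑ e ∈ (pth D hr a.2.1 a.1).edges.toFinset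
            \ ((pth D hr a.2.1 a.1).edges.toFinset ∩ E₀), sigE D e ≤ 0 := by
          apply Finset.sum_nonpos
          intro e he
          exact le_of_lt (sigE_neg ((pth D hr a.2.1 a.1).edges_subset_edgeSet
            (List.mem_toFinset.mp (Finset.mem_sdiff.mp he).1)))
        linarith
      have hcover := cover_sum (l.toFinset.filter (fun a => ¬ Sp a))
        (fun a => (pth D hr a.2.1 a.1).edges.toFinset ∩ E₀) E₀ (sigE D)
        (fun e he => le_of_lt (sigE_neg (hE₀edge e he)))
        (fun i _ => Finset.inter_subset_right) hcov
      have hchain : ∑ a ∈ l.toFinset.filter (fun a => ¬ Sp a),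
          ((pth D hr a.2.1 a.1).edges.map (sigE D)).sum ≤ ∑ e ∈ E₀, sigE D e :=
        le_trans (Finset.sum_le_sum hbound2) hcover
      rw [hspecsum, Finset.sum_congr rfl hordsum]
      have : ∑ a ∈ l.toFinset.filter (fun a => ¬ Sp a),
          -((pth D hr a.2.1 a.1).edges.map (sigE D)).sum
          = -∑ a ∈ l.toFinset.filter (fun a => ¬ Sp a),
            ((pth D hr a.2.1 a.1).edges.map (sigE D)).sum := by
        simp
      rw [this]
      linarith
    linarith

end NearlyConservativePaper
end
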